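/- If R ∈ A⊗A⊗A satisfies R¹⊗aR²⊗R³ = R¹⊗R²⊗R³a for all a ∈ A, R¹R²⊗R³ = 1⊗1 and R²⊗R³R¹ = 1⊗1, then R¹⊗1⊗R²⊗R³ = R¹⊗R²r¹⊗r²⊗R³r³ in A⊗A⊗A⊗A, where r is a second copy of R. -/

import Mathlib

/-!
In Sweedler notation: centrality with `a = r³` rewrites the right-hand side as
`R¹ ⊗ r³R²r¹ ⊗ r² ⊗ R³`. For every `a`, centrality turns `r³ a r¹ ⊗ r²` into `r³r¹ ⊗ ar²`,
which is `1 ⊗ a` by the normalization `r² ⊗ r³r¹ = 1 ⊗ 1`; with `a = R²` this collapses the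
right-hand side to `R¹ ⊗ 1 ⊗ R² ⊗ R³`.
-/

open TensorProduct

section

variable {k A ι : Type*} [CommRing k] [Ring A] [Algebra k A] {s : Finset ι} {x y z : ι → A}

theorem sum_mul_mul_tmul_eq_one_tmul
    (hcen : ∀ a : A, ∑ i ∈ s, x i ⊗ₜ[k] (a * y i) ⊗ₜ[k] z i
        = ∑ i ∈ s, x i ⊗ₜ[k] y i ⊗ₜ[k] (z i * a))
    (hnorm : ∑ i ∈ s, y i ⊗ₜ[k] (z i * x i) = (1 : A) ⊗ₜ[k] (1 : A)) (a : A) :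
    ∑ i ∈ s, (z i * a * x i) ⊗ₜ[k] y i = (1 : A) ⊗ₜ[k] a := by
  let mulOp : A ⊗[k] A →ₗ[k] A := LinearMap.mul' k A ∘ₗ (TensorProduct.comm k A A).toLinearMap
  have hmove := congrArg (map mulOp LinearMap.id ∘ₗ (rightComm k A A A).toLinearMap) (hcen a)
  have hscale := congrArg
    ((TensorProduct.comm k A A).toLinearMap ∘ₗ map (LinearMap.mulLeft k a) LinearMap.id) hnorm
  simp only [map_sum, LinearMap.comp_apply] at hmove hscale
  simpa [mulOp, mul_assoc] using hmove.symm.trans hscale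

end

theorem second_hexagon_identity_of_R_matrix
    (k A : Type*) [CommRing k] [Ring A] [Algebra k A]
    (ι : Type*) (s : Finset ι) (x y z : ι → A)
    (hcen : ∀ a : A,
      ∑ i ∈ s, x i ⊗ₜ[k] (a * y i) ⊗ₜ[k] z i
        = ∑ i ∈ s, x i ⊗ₜ[k] y i ⊗ₜ[k] (z i * a))
    (hnorm2 : ∑ i ∈ s, y i ⊗ₜ[k] (z i * x i) = (1 : A) ⊗ₜ[k] (1 : A)) :
    ∑ i ∈ s, x i ⊗ₜ[k] (1 : A) ⊗ₜ[k] y i ⊗ₜ[k] z i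
      = ∑ i ∈ s, ∑ j ∈ s,
          x i ⊗ₜ[k] (y i * x j) ⊗ₜ[k] y j ⊗ₜ[k] (z i * z j) := by
  have hmove (j : ι) : ∑ i ∈ s, x i ⊗ₜ[k] (z j * y i * x j) ⊗ₜ[k] y j ⊗ₜ[k] z i
      = ∑ i ∈ s, x i ⊗ₜ[k] (y i * x j) ⊗ₜ[k] y j ⊗ₜ[k] (z i * z j) := by
    simpa [map_sum, mul_assoc] using congrArg
      (map ((mk k _ A).flip (y j) ∘ₗ map LinearMap.id (LinearMap.mulRight k (x j))) LinearMap.id)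
      (hcen (z j))
  have hcollapse (i : ι) : ∑ j ∈ s, x i ⊗ₜ[k] (z j * y i * x j) ⊗ₜ[k] y j ⊗ₜ[k] z i
      = x i ⊗ₜ[k] (1 : A) ⊗ₜ[k] y i ⊗ₜ[k] z i := by
    simpa [map_sum] using congrArg ((mk k _ A).flip (z i) ∘ₗ map (mk k A A (x i)) LinearMap.id)
      (sum_mul_mul_tmul_eq_one_tmul hcen hnorm2 (y i))
  calc ∑ i ∈ s, x i ⊗ₜ[k] (1 : A) ⊗ₜ[k] y i ⊗ₜ[k] z i
      = ∑ i ∈ s, ∑ j ∈ s, x i ⊗ₜ[k] (z j * y i * x j) ⊗ₜ[k] y j ⊗ₜ[k] z i :=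
        (Finset.sum_congr rfl fun i _ => hcollapse i).symm
    _ = ∑ j ∈ s, ∑ i ∈ s, x i ⊗ₜ[k] (y i * x j) ⊗ₜ[k] y j ⊗ₜ[k] (z i * z j) := by
        rw [Finset.sum_comm]
        exact Finset.sum_congr rfl fun j _ => hmove j
    _ = _ := Finset.sum_comm
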